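/- For any state s = (t,e).π of Krivine's machine that respects the variable convention, if the λ-term s̄ is head normalizable, then the execution length l_h(s) is finite. -/
import Mathlib


/-- Untyped λ-terms with named variables. -/
inductive Lam : Type
  | var : ℕ → Lam
  | app : Lam → Lam → Lam
  | lam : ℕ → Lam → Lam
  deriving DecidableEq

namespace Lam

/-- Substitution of `s` for the variable `x`. -/
def subst : Lam → ℕ → Lam → Lam
  | var y, x, s => if y = x then s else var y
  | app v u, x, s => app (v.subst x s) (u.subst x s)
  | lam y t, x, s => if y = x then lam y t else lam y (t.subst x s)

/-- One-step β-reduction. -/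
inductive Beta : Lam → Lam → Prop
  | beta (x : ℕ) (u t : Lam) : Beta (app (lam x u) t) (u.subst x t)
  | appL {v v' : Lam} (u : Lam) : Beta v v' → Beta (app v u) (app v' u)
  | appR (v : Lam) {u u' : Lam} : Beta u u' → Beta (app v u) (app v u')
  | lam (x : ℕ) {t t' : Lam} : Beta t t' → Beta (lam x t) (lam x t')

/-- One-step head reduction. -/
inductive Head : Lam → Lam → Prop
  | beta (x : ℕ) (u t : Lam) : Head (app (lam x u) t) (u.subst x t)
  | app {v v' : Lam} (u : Lam) :
      Head v v' → (∀ x w, v ≠ lam x w) → Head (app v u) (app v' u)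
  | lam (x : ℕ) {t t' : Lam} : Head t t' → Head (lam x t) (lam x t')

/-- Terms of the shape `(x)t₁…t_p`. -/
inductive HeadApp : Lam → Prop
  | var (x : ℕ) : HeadApp (var x)
  | app {v : Lam} (u : Lam) : HeadApp v → HeadApp (app v u)

/-- Head normal forms: `λx₁…λx_m.(x)t₁…t_p`. -/
inductive HNF : Lam → Prop
  | head {t : Lam} : HeadApp t → HNF t
  | lam (x : ℕ) {t : Lam} : HNF t → HNF (lam x t)

def HeadNormalizable (t : Lam) : Prop :=
  ∃ t', Relation.ReflTransGen Head t t' ∧ HNF t'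

def Normalizable (t : Lam) : Prop :=
  ∃ t', Relation.ReflTransGen Beta t t' ∧ ∀ u, ¬ Beta t' u

/-- The multiset of binding occurrences of variables in a term. -/
def bound : Lam → Multiset ℕ
  | var _ => 0
  | app v u => v.bound + u.bound
  | lam x t => x ::ₘ t.bound

/-- `t` respects the variable convention: every variable is bound at most once. -/
def VC (t : Lam) : Prop := t.bound.Nodup

/-- Free variables. -/
def fv : Lam → Finset ℕ
  | var x => {x}
  | app v u => v.fv ∪ u.fv
  | lam x t => t.fv.erase x

end Lam

/-! Krivine's machine. -/

mutual
  /-- Closures: a λ-term together with an environment. -/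
  inductive Clo : Type
    | mk : Lam → Env → Clo
  /-- Environments: finite partial maps from variables to closures. -/
  inductive Env : Type
    | nil : Env
    | cons : ℕ → Clo → Env → Env
end

def Env.lookup : Env → ℕ → Option Clo
  | .nil, _ => none
  | .cons y c e, x => if x = y then some c else e.lookup x

mutual
  /-- The λ-term `c̄ = t[e]` denoted by a closure. -/
  def Clo.den : Clo → Lam
    | .mk t e => Env.applyEnv e t
  def Env.applyEnv : Env → Lam → Lam
    | .nil, t => t
    | .cons x c e, t => Env.applyEnv e (t.subst x c.den)
end

mutual
  /-- A closure respects the variable convention. -/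
  def Clo.VC : Clo → Prop
    | .mk t e => t.VC ∧ Env.VCfor e t
  def Env.VCfor : Env → Lam → Prop
    | .nil, _ => True
    | .cons x c e, t => Clo.VC c ∧ x ∉ t.bound ∧ Env.VCfor e t
end

/-- A state (a non-empty stack of closures, given as head and tail)
respects the variable convention. -/
def StateVC (c : Clo) (π : List Clo) : Prop := c.VC ∧ ∀ d ∈ π, d.VC

/-- The set `𝒦`: states, λ-terms/head contexts and abstractions over them. -/
inductive K : Type
  | st : Clo → List Clo → K
  | var : ℕ → K
  | app : K → K → K
  | lam : ℕ → K → K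

/-- The embedding of `Λ` into `𝒦`. -/
def Lam.toK : Lam → K
  | .var x => .var x
  | .app v u => .app v.toK u.toK
  | .lam x t => .lam x t.toK

/-- The λ-term `k̄` denoted by an element of `𝒦`. -/
def K.den : K → Lam
  | .st c π => (π.map Clo.den).foldl Lam.app c.den
  | .var x => .var x
  | .app v u => .app v.den u.den
  | .lam x k => .lam x k.den

/-- The transition map `≻_𝕊` on states. -/
inductive StepS : Clo → List Clo → Clo → List Clo → Prop
  | var {x : ℕ} {e : Env} {c : Clo} {π : List Clo} :
      Env.lookup e x = some c → StepS (.mk (.var x) e) π c π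
  | lam {x : ℕ} {u : Lam} {e : Env} {c : Clo} {π : List Clo} :
      StepS (.mk (.lam x u) e) (c :: π) (.mk u (.cons x c e)) π
  | app {v u : Lam} {e : Env} {π : List Clo} :
      StepS (.mk (.app v u) e) π (.mk v e) (.mk u e :: π)

/-- The transition map `≻_h` on `𝒦` (head-normal-form computing machine). -/
inductive StepH : K → K → Prop
  | s {c : Clo} {π : List Clo} {c' : Clo} {π' : List Clo} :
      StepS c π c' π' → StepH (.st c π) (.st c' π')
  | varFree {x : ℕ} {e : Env} {π : List Clo} :
      Env.lookup e x = none →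
      StepH (.st (.mk (.var x) e) π) (Lam.toK ((π.map Clo.den).foldl Lam.app (.var x)))
  | lamEmpty {x : ℕ} {u : Lam} {e : Env} :
      StepH (.st (.mk (.lam x u) e) []) (.lam x (.st (.mk u e) []))
  | underLam (x : ℕ) {k k' : K} : StepH k k' → StepH (.lam x k) (.lam x k')

/-- Krivine normal forms for `≻_h`. -/
def KNF (k : K) : Prop := ∀ k', ¬ StepH k k'

/-- `RunH k n` : the execution of `k` terminates in exactly `n` steps, i.e. `l_h(k) = n`. -/
inductive RunH : K → ℕ → Prop
  | zero {k : K} : KNF k → RunH k 0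
  | succ {k k' : K} {n : ℕ} : StepH k k' → RunH k' n → RunH k (n + 1)

/-! ### Head reduction theory -/

namespace Lam

lemma headApp_no_step {t : Lam} (h : HeadApp t) : ∀ u, ¬ Head t u := by
  induction h with
  | var x => intro u hu; cases hu
  | app u hv ih =>
    intro w hw
    cases hw with
    | beta x b a => cases hv
    | app _ hstep _ => exact ih _ hstep

lemma hnf_no_step {t : Lam} (h : HNF t) : ∀ u, ¬ Head t u := by
  induction h with
  | head h => exact headApp_no_step h
  | lam x _ ih =>
    intro u hu
    cases hu with
    | lam _ hstep => exact ih _ hstep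

lemma head_det {t u v : Lam} (h1 : Head t u) (h2 : Head t v) : u = v := by
  induction h1 generalizing v with
  | beta x b a =>
    cases h2 with
    | beta => rfl
    | app _ hstep hne => exact absurd rfl (hne _ _)
  | app a hstep hne ih =>
    cases h2 with
    | beta x b t => exact absurd rfl (hne _ _)
    | app _ hstep2 _ => rw [ih hstep2]
  | lam x hstep ih =>
    cases h2 with
    | lam _ hstep2 => rw [ih hstep2]

/-- Head reduction terminates in exactly `n` steps at an HNF. -/
inductive HeadN : Lam → ℕ → Prop
  | hnf {t : Lam} : HNF t → HeadN t 0
  | step {t t' : Lam} {n : ℕ} : Head t t' → HeadN t' n → HeadN t (n + 1)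

lemma headNormalizable_headN {t : Lam} (h : t.HeadNormalizable) : ∃ n, HeadN t n := by
  obtain ⟨t', hsteps, hnf⟩ := h
  induction hsteps using Relation.ReflTransGen.head_induction_on with
  | refl => exact ⟨0, .hnf hnf⟩
  | head hstep _ ih =>
    obtain ⟨n, hn⟩ := ih
    exact ⟨n + 1, .step hstep hn⟩

lemma headN_step {t t' : Lam} {n : ℕ} (h : HeadN t n) (hstep : Head t t') :
    ∃ m, n = m + 1 ∧ HeadN t' m := by
  cases h with
  | hnf h => exact absurd hstep (hnf_no_step h _)
  | step h1 h2 => exact ⟨_, rfl, head_det h1 hstep ▸ h2⟩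

lemma headN_lam {x : ℕ} {b : Lam} {n : ℕ} (h : HeadN (lam x b) n) : HeadN b n := by
  induction n generalizing b with
  | zero =>
    cases h with
    | hnf h =>
      cases h with
      | head h => cases h
      | lam _ h => exact .hnf h
  | succ n ih =>
    cases h with
    | step h1 h2 =>
      cases h1 with
      | lam _ hstep => exact .step hstep (ih h2)

lemma head_foldl {A B : Lam} (l : List Lam) (h : Head A B) (hne : ∀ y w, A ≠ lam y w) :
    Head (l.foldl Lam.app A) (l.foldl Lam.app B) := by
  induction l generalizing A B with
  | nil => exact h
  | cons a l ih =>
    exact ih (Head.app a h hne) (by intro y w hc; cases hc)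

lemma foldl_app_ne_lam (l : List Lam) (p q : Lam) : ∀ y w, l.foldl Lam.app (app p q) ≠ lam y w := by
  induction l generalizing p q with
  | nil => intro y w hc; cases hc
  | cons a l ih => intro y w; exact ih _ _ y w

lemma headApp_foldl_inv {A : Lam} {l : List Lam} (h : HeadApp (l.foldl Lam.app A)) : HeadApp A := by
  induction l generalizing A with
  | nil => exact h
  | cons a l ih =>
    have := ih h
    cases this with
    | app _ h => exact h

lemma not_hnf_foldl (l : List Lam) (x : ℕ) (b a : Lam) :
    ¬ HNF (l.foldl Lam.app (app (lam x b) a)) := by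
  intro h
  generalize hT : l.foldl Lam.app (app (lam x b) a) = T at h
  cases h with
  | head h =>
    subst hT
    have := headApp_foldl_inv h
    cases this with
    | app _ h => cases h
  | lam y h => exact foldl_app_ne_lam l _ _ _ _ hT

end Lam

/-! ### Machine-side basic lemmas -/

lemma knf_toK (t : Lam) : KNF (Lam.toK t) := by
  induction t with
  | var x => intro k' h; cases h
  | app v u ihv ihu => intro k' h; cases h
  | lam x b ih =>
    intro k' h
    cases h with
    | underLam _ h => exact ih _ h

lemma runH_lam {k : K} {n : ℕ} (x : ℕ) (h : RunH k n) : RunH (.lam x k) n := by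
  induction h with
  | zero hk =>
    refine .zero ?_
    intro k' h
    cases h with
    | underLam _ h => exact hk _ h
  | succ hstep _ ih => exact .succ (.underLam x hstep) ih

mutual
  def Clo.depth : Clo → ℕ
    | .mk _ e => e.depth + 1
  def Env.depth : Env → ℕ
    | .nil => 0
    | .cons _ c e => max c.depth e.depth
end

lemma lookup_depth : ∀ {e : Env} {x : ℕ} {t' : Lam} {e' : Env},
    Env.lookup e x = some (.mk t' e') → e'.depth < e.depth
  | .nil, x, t', e', h => by simp [Env.lookup] at h
  | .cons y c eR, x, t', e', h => by
    simp only [Env.lookup] at h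
    by_cases hxy : x = y
    · simp [hxy] at h
      subst h
      have h1 : e'.depth < Clo.depth (.mk t' e') := by simp [Clo.depth]
      exact lt_of_lt_of_le h1 (by simp [Env.depth])
    · simp [hxy] at h
      have := lookup_depth h
      simp [Env.depth]
      omega

/-! ### VC lemmas -/

lemma vcfor_mono : ∀ {e : Env} {t t' : Lam}, Env.VCfor e t →
    (∀ y, y ∈ t'.bound → y ∈ t.bound) → Env.VCfor e t'
  | .nil, t, t', h, hsub => trivial
  | .cons y c eR, t, t', h, hsub => by
    obtain ⟨h1, h2, h3⟩ := h
    exact ⟨h1, fun hc => h2 (hsub _ hc), vcfor_mono h3 hsub⟩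

lemma vcfor_lookup_none : ∀ {e : Env} {t : Lam} {x : ℕ}, Env.VCfor e t →
    x ∈ t.bound → Env.lookup e x = none
  | .nil, t, x, h, hx => rfl
  | .cons y c eR, t, x, h, hx => by
    obtain ⟨h1, h2, h3⟩ := h
    simp only [Env.lookup]
    have : x ≠ y := by rintro rfl; exact h2 hx
    simp [this, vcfor_lookup_none h3 hx]

lemma vcfor_lookup_vc : ∀ {e : Env} {t : Lam} {x : ℕ} {c : Clo}, Env.VCfor e t →
    Env.lookup e x = some c → c.VC
  | .nil, t, x, c, h, hx => by simp [Env.lookup] at hx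
  | .cons y d eR, t, x, c, h, hx => by
    obtain ⟨h1, h2, h3⟩ := h
    simp only [Env.lookup] at hx
    by_cases hxy : x = y
    · simp [hxy] at hx; exact hx ▸ h1
    · simp [hxy] at hx; exact vcfor_lookup_vc h3 hx

lemma vc_app_left {v u : Lam} (h : (Lam.app v u).VC) : v.VC := by
  simp only [Lam.VC, Lam.bound, Multiset.nodup_add] at h
  exact h.1

lemma vc_app_right {v u : Lam} (h : (Lam.app v u).VC) : u.VC := by
  simp only [Lam.VC, Lam.bound, Multiset.nodup_add] at h
  exact h.2.1

lemma vc_lam {x : ℕ} {u : Lam} (h : (Lam.lam x u).VC) : x ∉ u.bound ∧ u.VC := by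
  simp only [Lam.VC, Lam.bound, Multiset.nodup_cons] at h
  exact h

/-! ### Substitution lists and the named denotation -/

/-- Apply a list of substitutions, first entry first. -/
def applySubsts : List (ℕ × Lam) → Lam → Lam
  | [], t => t
  | (x, s) :: ρ, t => applySubsts ρ (t.subst x s)

/-- The substitution list induced by an environment. -/
def namedEnv : Env → List (ℕ × Lam)
  | .nil => []
  | .cons x c e => (x, c.den) :: namedEnv e

lemma applyEnv_eq_applySubsts : ∀ (e : Env) (t : Lam),
    Env.applyEnv e t = applySubsts (namedEnv e) t
  | .nil, t => rfl
  | .cons x c eR, t => by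
    simp [Env.applyEnv, namedEnv, applySubsts, applyEnv_eq_applySubsts eR]

lemma applySubsts_append (ρ₁ ρ₂ : List (ℕ × Lam)) (t : Lam) :
    applySubsts (ρ₁ ++ ρ₂) t = applySubsts ρ₂ (applySubsts ρ₁ t) := by
  induction ρ₁ generalizing t with
  | nil => rfl
  | cons p ρ ih => simp [applySubsts, ih]

lemma applySubsts_app (ρ : List (ℕ × Lam)) (a b : Lam) :
    applySubsts ρ (.app a b) = .app (applySubsts ρ a) (applySubsts ρ b) := by
  induction ρ generalizing a b with
  | nil => rfl
  | cons p ρ ih => simp [applySubsts, Lam.subst, ih]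

lemma applySubsts_var_notin (ρ : List (ℕ × Lam)) (x : ℕ) (h : ∀ p ∈ ρ, p.1 ≠ x) :
    applySubsts ρ (.var x) = .var x := by
  induction ρ with
  | nil => rfl
  | cons p ρ ih =>
    have h1 : p.1 ≠ x := h p (by simp)
    simp only [applySubsts, Lam.subst]
    rw [if_neg (by exact fun hc => h1 hc.symm)]
    exact ih (fun q hq => h q (by simp [hq]))

/-! ### Filtering substitution lists -/

/-- Remove the entries whose variable lies in `S`. -/
def filterOut (S : Finset ℕ) (ρ : List (ℕ × Lam)) : List (ℕ × Lam) :=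
  ρ.filter (fun p => decide (p.1 ∉ S))

lemma filterOut_empty (ρ : List (ℕ × Lam)) : filterOut ∅ ρ = ρ := by
  simp [filterOut]

lemma filterOut_append (S : Finset ℕ) (ρ₁ ρ₂ : List (ℕ × Lam)) :
    filterOut S (ρ₁ ++ ρ₂) = filterOut S ρ₁ ++ filterOut S ρ₂ := by
  simp [filterOut]

lemma mem_filterOut {S : Finset ℕ} {ρ : List (ℕ × Lam)} {p : ℕ × Lam}
    (h : p ∈ filterOut S ρ) : p ∈ ρ ∧ p.1 ∉ S := by
  simp [filterOut] at h
  exact h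

lemma applySubsts_filterOut_lam (S : Finset ℕ) (ρ : List (ℕ × Lam)) (z : ℕ) (u : Lam) :
    applySubsts (filterOut S ρ) (.lam z u) =
      .lam z (applySubsts (filterOut (insert z S) ρ) u) := by
  induction ρ generalizing u with
  | nil => rfl
  | cons p ρ ih =>
    obtain ⟨y, s⟩ := p
    by_cases hyS : y ∈ S
    · have e1 : filterOut S ((y, s) :: ρ) = filterOut S ρ := by
        simp [filterOut, hyS]
      have e2 : filterOut (insert z S) ((y, s) :: ρ) = filterOut (insert z S) ρ := by
        simp [filterOut, List.filter_cons, Finset.mem_insert_of_mem hyS, hyS]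
      rw [e1, e2, ih]
    · have e1 : filterOut S ((y, s) :: ρ) = (y, s) :: filterOut S ρ := by
        simp [filterOut, hyS]
      by_cases hyz : y = z
      · subst hyz
        have e2 : filterOut (insert y S) ((y, s) :: ρ) = filterOut (insert y S) ρ := by
          simp [filterOut]
        rw [e1, e2]
        show applySubsts (filterOut S ρ) ((Lam.lam y u).subst y s) = _
        rw [Lam.subst, if_pos rfl, ih]
      · have e2 : filterOut (insert z S) ((y, s) :: ρ) = (y, s) :: filterOut (insert z S) ρ := by
          simp [filterOut, hyS, hyz]
        rw [e1, e2]
        show applySubsts (filterOut S ρ) ((Lam.lam z u).subst y s) = _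
        rw [Lam.subst, if_neg (fun hc => hyz hc.symm)]
        show _ = Lam.lam z (applySubsts (filterOut (insert z S) ρ) (u.subst y s))
        rw [ih]

/-- Resolving a variable against the substitution list of an environment. -/
lemma reduce_var : ∀ (e : Env) (junk : List (ℕ × Lam)) {S : Finset ℕ} {x : ℕ}
    {t' : Lam} {e' : Env}, x ∉ S → Env.lookup e x = some (.mk t' e') →
    ∃ junk', applySubsts (filterOut S (namedEnv e ++ junk)) (.var x) =
      applySubsts (namedEnv e' ++ junk') t'
  | .nil, junk, S, x, t', e', hxS, hx => by simp [Env.lookup] at hx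
  | .cons y c eR, junk, S, x, t', e', hxS, hx => by
    simp only [Env.lookup] at hx
    by_cases hxy : x = y
    · subst hxy
      rw [if_pos rfl] at hx
      have hx' : c = Clo.mk t' e' := Option.some.inj hx
      subst hx'

      refine ⟨filterOut S (namedEnv eR ++ junk), ?_⟩
      simp only [namedEnv, List.cons_append]
      have hkeep : filterOut S ((x, Clo.den (.mk t' e')) :: (namedEnv eR ++ junk)) =
          (x, Clo.den (.mk t' e')) :: filterOut S (namedEnv eR ++ junk) := by
        simp [filterOut, hxS]
      rw [hkeep]
      have hden : Clo.den (.mk t' e') = applySubsts (namedEnv e') t' := by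
        simp [Clo.den, applyEnv_eq_applySubsts]
      show applySubsts (filterOut S (namedEnv eR ++ junk))
        ((Lam.var x).subst x (Clo.den (.mk t' e'))) = _
      rw [Lam.subst, if_pos rfl, hden, ← applySubsts_append]
    · simp only [if_neg hxy] at hx
      by_cases hyS : y ∈ S
      · have : filterOut S ((y, c.den) :: (namedEnv eR ++ junk)) =
            filterOut S (namedEnv eR ++ junk) := by simp [filterOut, hyS]
        simp only [namedEnv, List.cons_append, this]
        exact reduce_var eR junk hxS hx
      · have : filterOut S ((y, c.den) :: (namedEnv eR ++ junk)) =
            (y, c.den) :: filterOut S (namedEnv eR ++ junk) := by simp [filterOut, hyS]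
        simp only [namedEnv, List.cons_append, this, applySubsts, Lam.subst]
        rw [if_neg hxy]
        exact reduce_var eR junk hxS hx

/-! ### The simulation relation -/

/-- `RT M N t e` : the λ-term `N` simulates the closure `(t, e)`;
`M` is the set of pending binders (for which the wildcard rule is forbidden). -/
inductive RT : Finset ℕ → Lam → Lam → Env → Prop
  | wild {M : Finset ℕ} {N : Lam} {x : ℕ} {e : Env} :
      Env.lookup e x = none → x ∉ M → RT M N (.var x) e
  | matchv {M : Finset ℕ} {x : ℕ} {e : Env} :
      Env.lookup e x = none → RT M (.var x) (.var x) e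
  | jump {M : Finset ℕ} {N : Lam} {x : ℕ} {e : Env} {t' : Lam} {e' : Env} :
      Env.lookup e x = some (.mk t' e') → RT ∅ N t' e' → RT M N (.var x) e
  | app {M : Finset ℕ} {N₁ N₂ v u : Lam} {e : Env} :
      RT M N₁ v e → RT M N₂ u e → RT M (.app N₁ N₂) (.app v u) e
  | lam {M : Finset ℕ} {Nb : Lam} {x : ℕ} {u : Lam} {e : Env} :
      RT (insert x M) Nb u e → RT M (.lam x Nb) (.lam x u) e

lemma RT.mono {M M' : Finset ℕ} {N t : Lam} {e : Env}
    (h : RT M N t e) (hsub : M' ⊆ M) : RT M' N t e := by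
  induction h generalizing M' with
  | wild h1 h2 => exact .wild h1 (fun hc => h2 (hsub hc))
  | matchv h1 => exact .matchv h1
  | jump h1 h2 => exact .jump h1 h2
  | app _ _ ih1 ih2 => exact .app (ih1 hsub) (ih2 hsub)
  | lam _ ih => exact .lam (ih (Finset.insert_subset_insert _ hsub))

/-- Substituting a name on the named side only (no environment change). -/
lemma RT.substNamed {M : Finset ℕ} {N t : Lam} {e : Env}
    (h : RT M N t e) (x : ℕ) (Na : Lam) (hx : x ∉ M) :
    RT M (N.subst x Na) t e := by
  induction h with
  | @wild M' N' y e' h1 h2 => exact .wild h1 h2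
  | @matchv M' y e' h1 =>
    by_cases hxy : y = x
    · subst hxy
      simpa [Lam.subst] using RT.wild (M := M') (N := Na) h1 hx
    · simpa [Lam.subst, hxy] using RT.matchv (M := M') h1
  | @jump M' N' y e' t' env' h1 h2 ih =>
    exact .jump h1 (ih (by simp))
  | app _ _ ih1 ih2 =>
    rw [Lam.subst]
    exact .app (ih1 hx) (ih2 hx)
  | @lam M' Nb z u e' hb ih =>
    by_cases hzx : z = x
    · subst hzx
      simpa [Lam.subst] using RT.lam hb
    · rw [Lam.subst, if_neg hzx]
      exact .lam (ih (by simp [Finset.mem_insert, hx, Ne.symm hzx]))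

/-- The key lemma: consuming a pending binder, i.e. simultaneous β-substitution
on the named side and environment extension on the machine side. -/
lemma RT.push {M : Finset ℕ} {N t : Lam} {e : Env} {x : ℕ} {Na t' : Lam} {e' : Env}
    (h : RT M N t e) (hxM : x ∈ M) (hnone : Env.lookup e x = none)
    (hbound : x ∉ t.bound) (ha : RT ∅ Na t' e') :
    RT (M.erase x) (N.subst x Na) t (.cons x (.mk t' e') e) := by
  induction h with
  | @wild M' N' y e₀ h1 h2 =>
    have hyx : y ≠ x := fun hc => h2 (hc ▸ hxM)
    refine .wild ?_ ?_
    · simp [Env.lookup, hyx, h1]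
    · simp [Finset.mem_erase, h2]
  | @matchv M' y e₀ h1 =>
    by_cases hxy : y = x
    · subst hxy
      have : (Lam.var y).subst y Na = Na := by simp [Lam.subst]
      rw [this]
      exact .jump (by simp [Env.lookup]) ha
    · rw [Lam.subst, if_neg hxy]
      exact .matchv (by simp [Env.lookup, hxy, h1])
  | @jump M' N' y e₀ t₀ env₀ h1 h2 =>
    have hyx : y ≠ x := by rintro rfl; rw [hnone] at h1; cases h1
    exact .jump (by simp [Env.lookup, hyx, h1]) (h2.substNamed x Na (by simp))
  | @app M' N₁ N₂ v u e₀ hv hu ihv ihu =>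
    rw [Lam.subst]
    have hbv : x ∉ v.bound := fun hc => hbound (by simp [Lam.bound, hc])
    have hbu : x ∉ u.bound := fun hc => hbound (by simp [Lam.bound, hc])
    exact .app (ihv hxM hnone hbv) (ihu hxM hnone hbu)
  | @lam M' Nb z u e₀ hb ih =>
    have hzx : z ≠ x := by
      rintro rfl; exact hbound (by simp [Lam.bound])
    rw [Lam.subst, if_neg hzx]
    have hbu : x ∉ u.bound := fun hc => hbound (by simp [Lam.bound, hc])
    have := ih (Finset.mem_insert_of_mem hxM) hnone hbu
    rw [Finset.erase_insert_of_ne hzx] at this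
    exact .lam this

/-! ### The initial simulation: the naive denotation simulates the closure -/

lemma rel_init : ∀ (t : Lam) (e : Env) (S : Finset ℕ) (junk : List (ℕ × Lam)),
    Env.VCfor e t → (∀ z ∈ S, Env.lookup e z = none) →
    RT S (applySubsts (filterOut S (namedEnv e ++ junk)) t) t e
  | .var x, e, S, junk, hvc, hS => by
    by_cases hxS : x ∈ S
    · have : applySubsts (filterOut S (namedEnv e ++ junk)) (.var x) = .var x := by
        apply applySubsts_var_notin
        intro p hp hc
        exact (mem_filterOut hp).2 (hc ▸ hxS)
      rw [this]
      exact .matchv (hS x hxS)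
    · cases hx : Env.lookup e x with
      | none => exact .wild hx hxS
      | some c =>
        obtain ⟨t', e'⟩ := c
        obtain ⟨junk', heq⟩ := reduce_var e junk hxS hx
        rw [heq]
        refine RT.jump hx ?_
        have hvc' : Env.VCfor e' t' := (vcfor_lookup_vc hvc hx).2
        have := rel_init t' e' ∅ junk' hvc' (by simp)
        rwa [filterOut_empty] at this
  | .app v u, e, S, junk, hvc, hS => by
    rw [applySubsts_app]
    exact .app
      (rel_init v e S junk (vcfor_mono hvc (by intro y hy; simp [Lam.bound, hy])) hS)
      (rel_init u e S junk (vcfor_mono hvc (by intro y hy; simp [Lam.bound, hy])) hS)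
  | .lam z u, e, S, junk, hvc, hS => by
    rw [applySubsts_filterOut_lam]
    refine RT.lam ?_
    refine rel_init u e (insert z S) junk
      (vcfor_mono hvc (by intro y hy; simp [Lam.bound, hy])) ?_
    intro w hw
    rcases Finset.mem_insert.1 hw with rfl | hwS
    · exact vcfor_lookup_none hvc (by simp [Lam.bound])
    · exact hS w hwS
  termination_by t e S junk => (e.depth, sizeOf t)
  decreasing_by
  · exact Prod.Lex.left _ _ (lookup_depth hx)
  all_goals exact Prod.Lex.right _ (by first | (simp; omega) | simp | omega)

/-! ### The main induction -/

/-- Simulation for a closure. -/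
def RTC : Lam → Clo → Prop
  | Na, .mk t e => RT ∅ Na t e

lemma rtc_den {c : Clo} (h : c.VC) : RTC c.den c := by
  obtain ⟨t, e⟩ := c
  obtain ⟨h1, h2⟩ := h
  have := rel_init t e ∅ [] h2 (by simp)
  simp only [filterOut_empty, List.append_nil] at this
  show RT ∅ (Env.applyEnv e t) t e
  rwa [applyEnv_eq_applySubsts]

lemma rtc_stack {π : List Clo} (h : ∀ d ∈ π, d.VC) :
    List.Forall₂ RTC (π.map Clo.den) π := by
  induction π with
  | nil => exact .nil
  | cons c π ih =>
    exact .cons (rtc_den (h c (by simp))) (ih (fun d hd => h d (by simp [hd])))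

theorem main : ∀ (n : ℕ) (t : Lam) (e : Env) (π : List Clo) (N₀ : Lam) (Ns : List Lam),
    Lam.HeadN (Ns.foldl Lam.app N₀) n → RT ∅ N₀ t e → List.Forall₂ RTC Ns π →
    StateVC (.mk t e) π → ∃ m : ℕ, RunH (.st (.mk t e) π) m
  | n, .var x, e, π, N₀, Ns, hN, hrt, hstack, hvc => by
    cases hx : Env.lookup e x with
    | none => exact ⟨1, .succ (.varFree hx) (.zero (knf_toK _))⟩
    | some c =>
      cases hrt with
      | wild h1 _ => rw [hx] at h1; cases h1
      | matchv h1 => rw [hx] at h1; cases h1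
      | @jump M N₀' x' e₀ t' e' h1 h2 =>
        have hvc' : StateVC (.mk t' e') π :=
          ⟨vcfor_lookup_vc hvc.1.2 h1, hvc.2⟩
        obtain ⟨m, hm⟩ := main n t' e' π N₀ Ns hN h2 hstack hvc'
        exact ⟨m + 1, .succ (.s (.var h1)) hm⟩
  | n, .app v u, e, π, N₀, Ns, hN, hrt, hstack, hvc => by
    cases hrt with
    | app h1 h2 =>
      have hvcv : StateVC (.mk v e) (.mk u e :: π) := by
        refine ⟨⟨vc_app_left hvc.1.1, vcfor_mono hvc.1.2 (by intro y hy; simp [Lam.bound, hy])⟩, ?_⟩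
        intro d hd
        rcases List.mem_cons.1 hd with rfl | hd
        · exact ⟨vc_app_right hvc.1.1, vcfor_mono hvc.1.2 (by intro y hy; simp [Lam.bound, hy])⟩
        · exact hvc.2 d hd
      obtain ⟨m, hm⟩ := main n v e (.mk u e :: π) _ (_ :: Ns) hN h1 (.cons h2 hstack) hvcv
      exact ⟨m + 1, .succ (.s .app) hm⟩
  | n, .lam x u, e, .nil, N₀, Ns, hN, hrt, hstack, hvc => by
    cases hstack with
    | nil =>
      cases hrt with
      | lam hb =>
        have hb' : RT ∅ _ u e := hb.mono (by simp)
        have hN' : Lam.HeadN _ n := Lam.headN_lam (b := _) (x := x) hN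
        have hvc' : StateVC (.mk u e) [] := by
          refine ⟨⟨(vc_lam hvc.1.1).2, vcfor_mono hvc.1.2 (by intro y hy; simp [Lam.bound, hy])⟩, by simp⟩
        obtain ⟨m, hm⟩ := main n u e [] _ [] hN' hb' .nil hvc'
        exact ⟨m + 1, .succ .lamEmpty (runH_lam x hm)⟩
  | n, .lam x u, e, (c :: π'), N₀, Ns, hN, hrt, hstack, hvc => by
    obtain ⟨t', e'⟩ := c
    cases hstack with
    | @cons Na cc Ns' ππ hru hstack' =>
      cases hrt with
      | @lam M Nb x' u' e₀ hb =>
        -- the named head step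
        have hstep : Lam.Head (Ns'.foldl Lam.app (Lam.app (.lam x Nb) Na))
            (Ns'.foldl Lam.app (Nb.subst x Na)) :=
          Lam.head_foldl Ns' (.beta x Nb Na) (by intro y w hc; cases hc)
        obtain ⟨m, hnm, hN'⟩ := Lam.headN_step hN hstep
        -- simulation for the new state
        have hnone : Env.lookup e x = none :=
          vcfor_lookup_none hvc.1.2 (by simp [Lam.bound])
        have hxb : x ∉ u.bound := (vc_lam hvc.1.1).1
        have hra : RT ∅ Na t' e' := hru
        have hpush := RT.push hb (by simp) hnone hxb hra
        rw [Finset.erase_insert (by simp)] at hpush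
        have hvc' : StateVC (.mk u (.cons x (.mk t' e') e)) π' := by
          refine ⟨⟨(vc_lam hvc.1.1).2, ?_⟩, fun d hd => hvc.2 d (by simp [hd])⟩
          exact ⟨hvc.2 _ (by simp), hxb, vcfor_mono hvc.1.2 (by intro y hy; simp [Lam.bound, hy])⟩
        obtain ⟨m', hm'⟩ := main m u (.cons x (.mk t' e') e) π' (Nb.subst x Na) Ns' hN' hpush hstack' hvc'
        exact ⟨m' + 1, .succ (.s .lam) hm'⟩
  termination_by n t e π N₀ Ns => (n, e.depth, sizeOf t)
  decreasing_by
  · exact Prod.Lex.right _ (Prod.Lex.left _ _ (lookup_depth h1))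
  · exact Prod.Lex.right _ (Prod.Lex.right _ (by first | (simp; omega) | simp | omega))
  · exact Prod.Lex.right _ (Prod.Lex.right _ (by first | (simp; omega) | simp | omega))
  · exact Prod.Lex.left _ _ (by omega)

/-- if the λ-term denoted by a state respecting the variable
convention is head normalizable, then `l_h(s)` is finite. -/
theorem stmt3 (c : Clo) (π : List Clo) (hvc : StateVC c π)
    (h : (K.den (.st c π)).HeadNormalizable) : ∃ n : ℕ, RunH (.st c π) n := by
  obtain ⟨t, e⟩ := c
  obtain ⟨n, hn⟩ := Lam.headNormalizable_headN h
  exact main n t e π (Clo.den (.mk t e)) (π.map Clo.den) hn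
    (rtc_den hvc.1) (rtc_stack hvc.2) hvc
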